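/- arXiv:math/0302027 — 2 statements merged into one kernel-verified Lean document; each statement's English description precedes it below -/
import Mathlib

section
/- For any μ ∈ ℂ, any n ≥ 1, and any first-order differential operator of the form 𝒜(X₁,…,Xₙ) = Σ_{2p+m=1} β_p(x)(X₁''⋯X_p''X_{p+1}'⋯X_{p+m}'X_{p+m+1}⋯Xₙ)_+ that is symmetric multilinear in X₁,…,Xₙ ∈ sl₂ (i.e., with k = 1, so 𝒜(X₁,…,Xₙ) = β(x)·(X₁'X₂⋯Xₙ)_+) and sl₂-equivariant as a map to densities of degree μ, one has β = 0; i.e., there are no nonzero equivariant operators of odd differential order k = 1. -/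
/-- A vector field coefficient belongs to `sl₂`, i.e. is spanned by `1, x, x²`. -/
def IsSl2 (X : ℝ → ℂ) : Prop := ∃ a b c : ℂ, ∀ x : ℝ, X x = a + b * x + c * x ^ 2

/-- The bracket of vector fields, `[X,Y] = XY' - YX'`, on coefficient functions. -/
noncomputable def vfBracket (X Y : ℝ → ℂ) : ℝ → ℂ :=
  fun x => X x * deriv Y x - Y x * deriv X x

/-- The candidate first-order (k = 1) operator `𝒜(X₁,…,Xₙ) = β(x)·(X₁'X₂⋯Xₙ)₊`. -/
noncomputable def opA1 (n : ℕ) (hn : 0 < n) (β : ℝ → ℂ) (Xs : Fin n → ℝ → ℂ) (x : ℝ) : ℂ :=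
  β x * ∑ τ : Equiv.Perm (Fin n),
    deriv (Xs (τ ⟨0, hn⟩)) x * ∏ i ∈ Finset.univ.erase (⟨0, hn⟩ : Fin n), Xs (τ i) x

theorem no_odd_order_equivariant_operator (μ : ℂ) (n : ℕ) (hn : 0 < n)
    (β : ℝ → ℂ) (hβ : ContDiff ℝ (⊤ : ℕ∞) β)
    (hequiv : ∀ X : ℝ → ℂ, IsSl2 X → ∀ Xs : Fin n → ℝ → ℂ, (∀ i, IsSl2 (Xs i)) →
      ∀ x : ℝ,
        X x * deriv (fun y => opA1 n hn β Xs y) x + μ * deriv X x * opA1 n hn β Xs x =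
        ∑ i : Fin n, opA1 n hn β (Function.update Xs i (vfBracket X (Xs i))) x) :
    ∀ x : ℝ, β x = 0 := by
  intro x
  set i0 : Fin n := ⟨0, hn⟩ with hi0
  set X : ℝ → ℂ := fun y => (y:ℂ)^2 with hXdef
  set cs : Fin n → ℝ → ℂ := fun _ _ => 1 with hcs
  -- derivative facts
  have hdX : ∀ y : ℝ, deriv X y = 2*y := by
    intro y
    have h1 : HasDerivAt (fun t : ℝ => (t:ℂ)) 1 y := by
      have := Complex.ofRealCLM.hasDerivAt (x := y)
      simp at this
      exact this
    have h : HasDerivAt X (2*y) y := by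
      have := h1.mul h1
      rw [hXdef]
      simp only [pow_two, two_mul, one_mul, mul_one] at this ⊢
      exact this
    exact h.deriv
  -- the bracket [X, 1] = -X'
  have hg : ∀ i : Fin n, vfBracket X (cs i) = fun y : ℝ => -(2*(y:ℂ)) := by
    intro i
    funext y
    simp [vfBracket, hcs, hdX y]
  have hdg : ∀ y : ℝ, deriv (fun t : ℝ => -(2*(t:ℂ))) y = -2 := by
    intro y
    have h1 : HasDerivAt (fun t : ℝ => (t:ℂ)) 1 y := by
      have := Complex.ofRealCLM.hasDerivAt (x := y)
      simp at this
      exact this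
    have h : HasDerivAt (fun t : ℝ => -(2*(t:ℂ))) (-2) y := by
      have := (h1.const_mul (2:ℂ)).neg
      simp only [mul_one] at this
      exact this
    exact h.deriv
  -- opA1 of constants vanishes
  have hzero : (fun y => opA1 n hn β cs y) = fun _ => (0:ℂ) := by
    funext y
    simp [opA1, hcs]
  -- specialize equivariance
  have key := hequiv X ⟨0, 0, 1, fun y => by ring⟩ cs (fun i => ⟨1, 0, 0, fun y => by ring⟩) x
  rw [hzero] at key
  simp only [deriv_const, mul_zero, add_zero, zero_add] at key
  -- evaluate each summand on the right
  have hterm : ∀ (i : Fin n) (τ : Equiv.Perm (Fin n)),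
      deriv (Function.update cs i (vfBracket X (cs i)) (τ i0)) x *
        ∏ j ∈ Finset.univ.erase i0, Function.update cs i (vfBracket X (cs i)) (τ j) x
      = if τ i0 = i then (-2 : ℂ) else 0 := by
    intro i τ
    by_cases h : τ i0 = i
    · have hprod : ∀ j ∈ Finset.univ.erase i0,
          Function.update cs i (vfBracket X (cs i)) (τ j) x = 1 := by
        intro j hj
        have hji : τ j ≠ i := by
          rw [← h]
          exact fun hc => (Finset.mem_erase.mp hj).1 (τ.injective hc)
        rw [Function.update_of_ne hji]
      rw [Finset.prod_eq_one hprod, mul_one, if_pos h, h, Function.update_self, hg i, hdg x]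
    · rw [if_neg h, Function.update_of_ne h]
      simp [hcs]
  have hRHS : ∑ i : Fin n, opA1 n hn β (Function.update cs i (vfBracket X (cs i))) x
      = β x * ((Fintype.card (Equiv.Perm (Fin n)) : ℂ) * (-2)) := by
    simp only [opA1]
    rw [← Finset.mul_sum]
    congr 1
    calc ∑ i : Fin n, ∑ τ : Equiv.Perm (Fin n),
          deriv (Function.update cs i (vfBracket X (cs i)) (τ i0)) x *
            ∏ j ∈ Finset.univ.erase i0, Function.update cs i (vfBracket X (cs i)) (τ j) x
        = ∑ i : Fin n, ∑ τ : Equiv.Perm (Fin n), (if τ i0 = i then (-2:ℂ) else 0) := by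
          refine Finset.sum_congr rfl fun i _ => Finset.sum_congr rfl fun τ _ => hterm i τ
      _ = ∑ τ : Equiv.Perm (Fin n), ∑ i : Fin n, (if τ i0 = i then (-2:ℂ) else 0) :=
          Finset.sum_comm
      _ = ∑ τ : Equiv.Perm (Fin n), (-2:ℂ) := by
          refine Finset.sum_congr rfl fun τ _ => ?_
          simp
      _ = (Fintype.card (Equiv.Perm (Fin n)) : ℂ) * (-2) := by
          simp [Finset.sum_const, mul_comm]
  rw [hRHS] at key
  have h0 : opA1 n hn β cs x = 0 := congrFun hzero x
  rw [h0, mul_zero] at key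
  have hcard : (Fintype.card (Equiv.Perm (Fin n)) : ℂ) ≠ 0 := by
    exact_mod_cast Fintype.card_ne_zero
  have hne : ((Fintype.card (Equiv.Perm (Fin n)) : ℂ) * (-2)) ≠ 0 :=
    mul_ne_zero hcard (by norm_num)
  rcases mul_eq_zero.mp key.symm with h | h
  · exact h
  · exact absurd h hne
end

section
/- For even k with 0 ≤ k ≤ n, the operator 𝒜_k(X₁,…,Xₙ) = Σ_{2p+m=k} C(k/2, p)·(-2)^p·(X₁''⋯X_p''·X_{p+1}'⋯X_{p+m}'·X_{p+m+1}⋯Xₙ)_+ is sl₂-equivariant as a map from sl₂ⁿ to tensor densities of degree k - n: for all X ∈ sl₂, X·(𝒜_k(X₁,…,Xₙ))' + (k-n)X'·𝒜_k(X₁,…,Xₙ) = Σᵢ 𝒜_k(X₁,…,[X,Xᵢ],…,Xₙ). -/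
/-- The operator
`𝒜ₖ(X₁,…,Xₙ) = Σ_{2p+m=k} C(k/2,p)·(-2)^p·(X₁''⋯Xp''·X_{p+1}'⋯X_{p+m}'·X_{p+m+1}⋯Xₙ)₊`. -/
noncomputable def opAk (n k : ℕ) (Xs : Fin n → ℝ → ℂ) (x : ℝ) : ℂ :=
  ∑ p ∈ Finset.range (k / 2 + 1), ((k / 2).choose p : ℂ) * (-2 : ℂ) ^ p *
    ∑ τ : Equiv.Perm (Fin n), ∏ i : Fin n,
      (if (i : ℕ) < p then deriv (deriv (Xs (τ i))) x
       else if (i : ℕ) < p + (k - 2 * p) then deriv (Xs (τ i)) x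
       else Xs (τ i) x)

/-!
At a point `x`, write `S(p, m)` for the symmetrized product of the jets `(Xᵢ, Xᵢ', Xᵢ'')` in which
`p` slots carry a second and `m` slots a first derivative; `𝒜ₖ = Σₚ C(q,p)(-2)ᵖ S(p, k - 2p)` with
`q = k/2`. For `X ∈ sl₂` (so `X''' = 0`) Leibniz's rule gives
`[X,Y]⁽ᵈ⁾ = X Y⁽ᵈ⁺¹⁾ + (d - 1) X' Y⁽ᵈ⁾ + (C(d,2) - d) X'' Y⁽ᵈ⁻¹⁾`. Substituting this slot by slot
into `Σᵢ 𝒜ₖ(…, [X,Xᵢ], …)`, the `X` terms reassemble `X·𝒜ₖ'`, the `X'` terms give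
`Σᵢ (dᵢ - 1) = 2p + m - n = k - n` times each summand, and the `X''` terms lower one derivative
order, producing `-X''·(p·S(p-1, m+1) + m·S(p, m-1))`. These cancel across `p` in the binomial sum
because `(p+1)·C(q,p+1) = (q-p)·C(q,p)`.
-/

open Finset Function

theorem prod_apply_update_eq_mul_prod_erase {ι M : Type*} [Fintype ι] [DecidableEq ι]
    [CommMonoid M] {α : Type*} (g : ι → α → M) (o : ι → α) (j : ι) (r : α) :
    ∏ l, g l (update o j r l) = g j r * ∏ l ∈ univ.erase j, g l (o l) := by
  rw [← mul_prod_erase univ _ (mem_univ j), update_self]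
  congr 1
  exact prod_congr rfl fun l hl => by rw [update_of_ne (ne_of_mem_erase hl)]

section PermSum

variable {R : Type*} [CommSemiring R] {n : ℕ}

/-- `permSum J o` is `(f₁⋯fₙ)₊` with slot `i` carrying the `o i`-th derivative, where `J j d` is
the `d`-th derivative of the `j`-th field. -/
def permSum (J : Fin n → ℕ → R) (o : Fin n → ℕ) : R :=
  ∑ τ : Equiv.Perm (Fin n), ∏ i, J (τ i) (o i)

def levelPattern (n p m : ℕ) (i : Fin n) : ℕ :=
  if (i : ℕ) < p then 2 else if (i : ℕ) < p + m then 1 else 0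

theorem permSum_comp_perm (J : Fin n → ℕ → R) (o : Fin n → ℕ) (σ : Equiv.Perm (Fin n)) :
    permSum J (o ∘ σ) = permSum J o := by
  refine Fintype.sum_equiv (Equiv.mulRight σ⁻¹) _ _ fun τ => ?_
  conv_rhs => rw [← Equiv.prod_comp σ]
  simp [Equiv.Perm.mul_apply]

theorem permSum_update (J : Fin n → ℕ → R) (o : Fin n → ℕ) (j : Fin n) (r : ℕ) :
    permSum J (update o j r) =
      ∑ τ : Equiv.Perm (Fin n), J (τ j) r * ∏ l ∈ univ.erase j, J (τ l) (o l) :=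
  sum_congr rfl fun τ _ => prod_apply_update_eq_mul_prod_erase (fun l => J (τ l)) o j r

theorem sum_permSum_update (J K : Fin n → ℕ → R) (o : Fin n → ℕ) :
    ∑ i, permSum (update J i (K i)) o =
      ∑ j, ∑ τ : Equiv.Perm (Fin n), K (τ j) (o j) * ∏ l ∈ univ.erase j, J (τ l) (o l) := by
  simp only [permSum]
  rw [sum_comm]
  conv_rhs => rw [sum_comm]
  refine sum_congr rfl fun τ _ => ?_
  rw [← Equiv.sum_comp τ]
  refine sum_congr rfl fun j _ => ?_
  rw [← mul_prod_erase univ _ (mem_univ j), update_self]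
  congr 1
  exact prod_congr rfl fun l hl => by rw [update_of_ne (τ.injective.ne (ne_of_mem_erase hl))]

theorem sum_permSum_update_of_eq (J K : Fin n → ℕ → R) (o : Fin n → ℕ) (a : R) (b c : ℕ → R)
    (hK : ∀ i d, K i d = a * J i (d + 1) + b d * J i d + c d * J i (d - 1)) :
    ∑ i, permSum (update J i (K i)) o =
      a * ∑ j, permSum J (update o j (o j + 1)) + (∑ j, b (o j)) * permSum J o +
        ∑ j, c (o j) * permSum J (update o j (o j - 1)) := by
  have hself : ∀ j, permSum J o = permSum J (update o j (o j)) := fun j => by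
    rw [update_eq_self]
  rw [sum_permSum_update, mul_sum, sum_mul, ← sum_add_distrib, ← sum_add_distrib]
  refine sum_congr rfl fun j _ => ?_
  rw [hself j, permSum_update, permSum_update, permSum_update, mul_sum, mul_sum, mul_sum,
    ← sum_add_distrib, ← sum_add_distrib]
  exact sum_congr rfl fun τ _ => by rw [hK]; ring

end PermSum

theorem hasDerivAt_permSum {𝕜 𝔸 : Type*} [NontriviallyNormedField 𝕜] [NormedCommRing 𝔸]
    [NormedAlgebra 𝕜 𝔸] {n : ℕ} (F : Fin n → ℕ → 𝕜 → 𝔸) (o : Fin n → ℕ) (x : 𝕜)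
    (hF : ∀ i d, HasDerivAt (F i d) (F i (d + 1) x) x) :
    HasDerivAt (fun y => permSum (fun i d => F i d y) o)
      (∑ j, permSum (fun i d => F i d x) (update o j (o j + 1))) x := by
  have h := HasDerivAt.fun_sum (u := univ) fun (τ : Equiv.Perm (Fin n)) _ =>
    HasDerivAt.fun_finsetProd (u := univ) fun l _ => hF (τ l) (o l)
  refine h.congr_deriv ?_
  simp only [permSum]
  rw [sum_comm]
  refine sum_congr rfl fun j _ => sum_congr rfl fun τ _ => ?_
  rw [prod_apply_update_eq_mul_prod_erase (fun l d => F (τ l) d x), smul_eq_mul, mul_comm]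

section LevelPattern

variable {n : ℕ}

theorem update_levelPattern_of_lt {p m : ℕ} {j : Fin n} (hj : (j : ℕ) < p) (hpn : p ≤ n) :
    update (levelPattern n p m) j 1 =
      levelPattern n (p - 1) (m + 1) ∘ Equiv.swap j ⟨p - 1, by omega⟩ := by
  funext i
  simp only [comp, update_apply, Equiv.swap_apply_def, levelPattern, Fin.ext_iff]
  split_ifs <;> simp_all <;> omega

theorem update_levelPattern_of_le_of_lt {p m : ℕ} {j : Fin n} (hpj : p ≤ (j : ℕ))
    (hj : (j : ℕ) < p + m) (hpmn : p + m ≤ n) :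
    update (levelPattern n p m) j 0 =
      levelPattern n p (m - 1) ∘ Equiv.swap j ⟨p + m - 1, by omega⟩ := by
  funext i
  simp only [comp, update_apply, Equiv.swap_apply_def, levelPattern, Fin.ext_iff]
  split_ifs <;> simp_all <;> omega

theorem sum_levelPattern {M : Type*} [AddCommMonoid M] {p m : ℕ} (hpmn : p + m ≤ n)
    (g : ℕ → M) :
    ∑ j, g (levelPattern n p m j) = p • g 2 + m • g 1 + (n - (p + m)) • g 0 := by
  simp only [levelPattern]
  rw [Fin.sum_univ_eq_sum_range (fun t => g (if t < p then 2 else if t < p + m then 1 else 0)),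
    range_eq_Ico, ← sum_Ico_consecutive _ (Nat.zero_le (p + m)) hpmn,
    ← sum_Ico_consecutive _ (Nat.zero_le p) (Nat.le_add_right p m),
    sum_eq_card_nsmul fun t ht => by rw [if_pos (mem_Ico.mp ht).2],
    sum_eq_card_nsmul fun t ht => by
      rw [if_neg (mem_Ico.mp ht).1.not_gt, if_pos (mem_Ico.mp ht).2],
    sum_eq_card_nsmul fun t ht => by
      rw [if_neg (by grind), if_neg (mem_Ico.mp ht).1.not_gt]]
  simp

variable {R : Type*} [CommSemiring R]

theorem sum_mul_permSum_lower_levelPattern {p m : ℕ} (hpmn : p + m ≤ n) (J : Fin n → ℕ → R)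
    (c : ℕ → R) :
    ∑ j, c (levelPattern n p m j) *
        permSum J (update (levelPattern n p m) j (levelPattern n p m j - 1)) =
      p • (c 2 * permSum J (levelPattern n (p - 1) (m + 1))) +
        m • (c 1 * permSum J (levelPattern n p (m - 1))) +
        (n - (p + m)) • (c 0 * permSum J (levelPattern n p m)) := by
  set g : ℕ → R := fun d => c d * permSum J (if d = 2 then levelPattern n (p - 1) (m + 1)
    else if d = 1 then levelPattern n p (m - 1) else levelPattern n p m)
  have hterm : ∀ j, c (levelPattern n p m j) *
      permSum J (update (levelPattern n p m) j (levelPattern n p m j - 1)) =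
        g (levelPattern n p m j) := by
    intro j
    by_cases hjp : (j : ℕ) < p
    · have hj : levelPattern n p m j = 2 := if_pos hjp
      simp [hj, g, update_levelPattern_of_lt hjp (by omega), permSum_comp_perm]
    by_cases hjm : (j : ℕ) < p + m
    · have hj : levelPattern n p m j = 1 := by simp [levelPattern, hjp, hjm]
      simp [hj, g, update_levelPattern_of_le_of_lt (not_lt.mp hjp) hjm hpmn, permSum_comp_perm]
    · have hj : levelPattern n p m j = 0 := by simp [levelPattern, hjp, hjm]
      have hupd : update (levelPattern n p m) j 0 = levelPattern n p m := by
        rw [← hj, update_eq_self]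
      simp [hj, g, hupd]
  rw [sum_congr rfl fun j _ => hterm j, sum_levelPattern hpmn]
  simp [g]

end LevelPattern

section Equivariance

variable {R : Type*} [CommRing R] {n : ℕ}

theorem sum_permSum_update_levelPattern {p m : ℕ} (hpmn : p + m ≤ n) (J K : Fin n → ℕ → R)
    (a β γ : R) (hK : ∀ i d, K i d = a * J i (d + 1) + ((d : R) - 1) * β * J i d +
      ((d.choose 2 : R) - d) * γ * J i (d - 1)) :
    ∑ i, permSum (update J i (K i)) (levelPattern n p m) =
      a * ∑ j, permSum J (update (levelPattern n p m) j (levelPattern n p m j + 1)) +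
        (((2 * p + m : ℕ) : R) - n) * β * permSum J (levelPattern n p m) -
        γ * (p * permSum J (levelPattern n (p - 1) (m + 1)) +
          m * permSum J (levelPattern n p (m - 1))) := by
  rw [sum_permSum_update_of_eq J K _ a _ _ hK,
    sum_levelPattern hpmn (fun d => ((d : R) - 1) * β),
    sum_mul_permSum_lower_levelPattern hpmn J (fun d => ((d.choose 2 : R) - d) * γ)]
  simp only [nsmul_eq_mul, Nat.cast_sub hpmn]
  simp only [Nat.choose_self, Nat.choose_succ_self, Nat.choose_zero_succ, Nat.cast_ofNat,
    Nat.cast_one, Nat.cast_zero, Nat.cast_add, Nat.cast_mul]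
  ring

theorem sum_choose_mul_neg_two_pow_telescope (q : ℕ) (V : ℕ → R) :
    ∑ p ∈ range (q + 1), (q.choose p : R) * (-2) ^ p *
      (p * V (p - 1) + 2 * ((q - p : ℕ) : R) * V p) = 0 := by
  simp only [mul_add, sum_add_distrib]
  rw [sum_range_succ', sum_range_succ (fun p => _ * (2 * _ * V p))]
  simp only [Nat.cast_zero, mul_zero, zero_mul, add_zero, Nat.sub_self, Nat.add_sub_cancel,
    ← sum_add_distrib]
  refine sum_eq_zero fun p hp => ?_
  have h : ((q.choose (p + 1) * (p + 1) : ℕ) : R) = ((q.choose p * (q - p) : ℕ) : R) := by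
    rw [Nat.choose_succ_right_eq]
  push_cast at h ⊢
  linear_combination (-2) * (-2) ^ p * V p * h

def akSum (n k : ℕ) (F : (Fin n → ℕ) → R) : R :=
  ∑ p ∈ range (k / 2 + 1),
    ((k / 2).choose p : R) * (-2) ^ p * F (levelPattern n p (k - 2 * p))

theorem sum_akSum_update {k : ℕ} (hk : Even k) (hkn : k ≤ n) (J K : Fin n → ℕ → R)
    (a β γ : R) (hK : ∀ i d, K i d = a * J i (d + 1) + ((d : R) - 1) * β * J i d +
      ((d.choose 2 : R) - d) * γ * J i (d - 1)) :
    ∑ i, akSum n k (permSum (update J i (K i))) =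
      a * akSum n k (fun o => ∑ j, permSum J (update o j (o j + 1))) +
        ((k : R) - n) * β * akSum n k (permSum J) := by
  obtain ⟨q, rfl⟩ := hk.two_dvd
  set V : ℕ → R := fun p => permSum J (levelPattern n p (2 * q - 2 * p - 1))
  have hper : ∀ p ∈ range (q + 1), (q.choose p : R) * (-2) ^ p *
      ∑ i, permSum (update J i (K i)) (levelPattern n p (2 * q - 2 * p)) =
        a * ((q.choose p : R) * (-2) ^ p * ∑ j, permSum J (update (levelPattern n p (2 * q - 2 * p))
            j (levelPattern n p (2 * q - 2 * p) j + 1))) +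
          (((2 * q : ℕ) : R) - n) * β *
            ((q.choose p : R) * (-2) ^ p * permSum J (levelPattern n p (2 * q - 2 * p))) -
          γ * ((q.choose p : R) * (-2) ^ p * (p * V (p - 1) + 2 * ((q - p : ℕ) : R) * V p)) := by
    intro p hp
    have hpq : p ≤ q := Nat.lt_succ_iff.mp (mem_range.mp hp)
    have hm : ((2 * q - 2 * p : ℕ) : R) = 2 * ((q - p : ℕ) : R) := by
      rw [← Nat.mul_sub, Nat.cast_mul, Nat.cast_ofNat]
    have hV : (p : R) * permSum J (levelPattern n (p - 1) (2 * q - 2 * p + 1)) =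
        p * V (p - 1) := by
      obtain _ | p := p
      · simp
      · simp only [V, Nat.add_sub_cancel, show 2 * q - 2 * (p + 1) + 1 = 2 * q - 2 * p - 1 by omega]
    rw [sum_permSum_update_levelPattern (by omega) J K a β γ hK, Nat.add_sub_cancel' (by omega),
      hm, hV]
    ring
  simp only [akSum, Nat.mul_div_cancel_left q two_pos]
  rw [sum_comm]
  simp only [← mul_sum]
  rw [sum_congr rfl hper]
  simp only [sum_sub_distrib, sum_add_distrib, ← mul_sum, sum_choose_mul_neg_two_pow_telescope,
    mul_zero, sub_zero]

end Equivariance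

noncomputable def jet (x : ℝ) (f : ℝ → ℂ) (d : ℕ) : ℂ := deriv^[d] f x

theorem opAk_eq_akSum (n k : ℕ) (Xs : Fin n → ℝ → ℂ) (x : ℝ) :
    opAk n k Xs x = akSum n k (permSum (jet x ∘ Xs)) := by
  refine sum_congr rfl fun p _ => congrArg _ <|
    sum_congr rfl fun τ _ => prod_congr rfl fun i _ => ?_
  simp only [levelPattern, comp, jet]
  split_ifs <;> rfl

theorem HasDerivAt.akSum {n k : ℕ} {F : (Fin n → ℕ) → ℝ → ℂ} {F' : (Fin n → ℕ) → ℂ} {x : ℝ}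
    (hF : ∀ o, HasDerivAt (F o) (F' o) x) :
    HasDerivAt (fun y => akSum n k (F · y)) (akSum n k F') x :=
  HasDerivAt.fun_sum fun _ _ => (hF _).const_mul _

theorem hasDerivAt_opAk (n k : ℕ) {Xs : Fin n → ℝ → ℂ} {x : ℝ}
    (hXs : ∀ i d, HasDerivAt (deriv^[d] (Xs i)) (deriv^[d + 1] (Xs i) x) x) :
    HasDerivAt (fun y => opAk n k Xs y)
      (akSum n k fun o => ∑ j, permSum (jet x ∘ Xs) (update o j (o j + 1))) x := by
  simp only [opAk_eq_akSum]
  exact HasDerivAt.akSum fun o => hasDerivAt_permSum (fun i d => deriv^[d] (Xs i)) o x hXs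

noncomputable def quadJet (a b c : ℂ) : ℕ → ℝ → ℂ
  | 0 => fun x => a + b * x + c * (x : ℂ) ^ 2
  | 1 => fun x => b + 2 * c * x
  | 2 => fun _ => 2 * c
  | _ + 3 => fun _ => 0

theorem hasDerivAt_quadJet (a b c : ℂ) (d : ℕ) (x : ℝ) :
    HasDerivAt (quadJet a b c d) (quadJet a b c (d + 1) x) x := by
  match d with
  | 0 =>
    have h := ((((hasDerivAt_id (x : ℂ)).const_mul b).const_add a).add
      ((hasDerivAt_pow 2 (x : ℂ)).const_mul c)).comp_ofReal
    refine h.congr_deriv ?_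
    show _ = b + 2 * c * x
    push_cast
    ring
  | 1 =>
    have h := (((hasDerivAt_id (x : ℂ)).const_mul (2 * c)).const_add b).comp_ofReal
    exact h.congr_deriv (mul_one _)
  | 2 => exact hasDerivAt_const x _
  | _ + 3 => exact hasDerivAt_const x _

theorem deriv_quadJet (a b c : ℂ) (d : ℕ) : deriv (quadJet a b c d) = quadJet a b c (d + 1) :=
  funext fun x => (hasDerivAt_quadJet a b c d x).deriv

theorem iterate_deriv_quadJet (a b c : ℂ) (d : ℕ) :
    deriv^[d] (quadJet a b c 0) = quadJet a b c d := by
  induction d with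
  | zero => rfl
  | succ d ih => rw [iterate_succ_apply', ih, deriv_quadJet]

theorem IsSl2.exists_eq_quadJet {X : ℝ → ℂ} (hX : IsSl2 X) : ∃ a b c, X = quadJet a b c 0 := by
  obtain ⟨a, b, c, h⟩ := hX
  exact ⟨a, b, c, funext h⟩

theorem IsSl2.hasDerivAt_iterate_deriv {X : ℝ → ℂ} (hX : IsSl2 X) (d : ℕ) (x : ℝ) :
    HasDerivAt (deriv^[d] X) (deriv^[d + 1] X x) x := by
  obtain ⟨a, b, c, rfl⟩ := hX.exists_eq_quadJet
  rw [iterate_deriv_quadJet, iterate_deriv_quadJet]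
  exact hasDerivAt_quadJet a b c d x

theorem vfBracket_quadJet (u v w a b c : ℂ) :
    vfBracket (quadJet u v w 0) (quadJet a b c 0) =
      quadJet (u * b - v * a) (2 * (u * c - w * a)) (v * c - w * b) 0 := by
  funext x
  simp only [vfBracket, deriv_quadJet]
  simp only [quadJet]
  ring

/-- Leibniz's rule for `XY' - YX'` when `X''' = 0`. At `d = 0` the last coefficient vanishes, so the
truncated `d - 1` does not matter. -/
theorem IsSl2.jet_vfBracket {X Y : ℝ → ℂ} (hX : IsSl2 X) (hY : IsSl2 Y) (x : ℝ) (d : ℕ) :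
    jet x (vfBracket X Y) d = X x * jet x Y (d + 1) + ((d : ℂ) - 1) * deriv X x * jet x Y d +
      ((d.choose 2 : ℂ) - d) * deriv (deriv X) x * jet x Y (d - 1) := by
  obtain ⟨u, v, w, rfl⟩ := hX.exists_eq_quadJet
  obtain ⟨a, b, c, rfl⟩ := hY.exists_eq_quadJet
  simp only [jet, vfBracket_quadJet, iterate_deriv_quadJet, deriv_quadJet]
  rcases d with _ | _ | _ | _ | d <;> norm_num [quadJet, Nat.choose_two_right] <;> ring

theorem opAk_equivariant (n k : ℕ) (hk : Even k) (hkn : k ≤ n)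
    (Xs : Fin n → ℝ → ℂ) (hXs : ∀ i, IsSl2 (Xs i)) (X : ℝ → ℂ) (hX : IsSl2 X) :
    ∀ x : ℝ,
      X x * deriv (fun y => opAk n k Xs y) x + ((k : ℂ) - (n : ℂ)) * deriv X x * opAk n k Xs x =
      ∑ i : Fin n, opAk n k (Function.update Xs i (vfBracket X (Xs i))) x := by
  intro x
  rw [(hasDerivAt_opAk n k fun i d => (hXs i).hasDerivAt_iterate_deriv d x).deriv]
  simp only [opAk_eq_akSum, comp_update]
  rw [sum_akSum_update hk hkn (jet x ∘ Xs) _ _ _ _ fun i d => hX.jet_vfBracket (hXs i) x d]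
end
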